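/- arXiv:1911.05784 — 4 statements merged into one kernel-verified Lean document; each statement's English description precedes it below -/
import Mathlib

section
/- Theorem (TLMP individual rationality): Let W be a positive integer, A the W×W ramp matrix, and P = {g ∈ ℝ^W : 0 ≤ g ≤ ḡ and −ṟ ≤ A g ≤ r̄} the feasible set of a generator with convex differentiable cost f : ℝ^W → ℝ. Suppose g* ∈ P, λ* ∈ ℝ^W, and there exist componentwise nonnegative vectors μ̄*, μ*, ρ̄*, ρ* with ∇f(g*) − λ* + Aᵀ(μ̄* − μ*) + (ρ̄* − ρ*) = 0 and complementary slackness: for all t, μ̄*_t·((A g*)_t − r̄_t) = 0, μ*_t·((A g*)_t + ṟ_t) = 0, ρ̄*_t·(g*_t − ḡ_t) = 0, ρ*_t·g*_t = 0. Define the temporal locational marginal price π^TLMP = λ* − Aᵀ(μ̄* − μ*). Then g* minimizes f(g) − gᵀπ^TLMP over P. -/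
/-- The W×W ramp matrix: lower bidiagonal with 1 on the diagonal and -1 on
the first subdiagonal. -/
def rampMatrix (W : ℕ) : Matrix (Fin W) (Fin W) ℝ :=
  fun i j => if i = j then 1 else if (j : ℕ) + 1 = (i : ℕ) then -1 else 0

/-- The generator feasible set
`P = {g : 0 ≤ g ≤ ḡ and -ṟ ≤ A g ≤ r̄ componentwise}`. -/
def genFeasible {W : ℕ} (gbar rlo rhi : Fin W → ℝ) : Set (Fin W → ℝ) :=
  {g | (∀ t, 0 ≤ g t ∧ g t ≤ gbar t) ∧
       (∀ t, -(rlo t) ≤ (rampMatrix W).mulVec g t ∧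
             (rampMatrix W).mulVec g t ≤ rhi t)}

/-- Gradient inequality for a convex differentiable function on a pi space. -/
lemma convex_grad_ineq {W : ℕ} (f : (Fin W → ℝ) → ℝ)
    (hconv : ConvexOn ℝ Set.univ f) (hdiff : Differentiable ℝ f)
    (x y : Fin W → ℝ) :
    fderiv ℝ f x (y - x) ≤ f y - f x := by
  rcases eq_or_ne y x with rfl | hne
  · simp
  set d : Fin W → ℝ := y - x with hd
  set L : ℝ →ᵃ[ℝ] (Fin W → ℝ) := AffineMap.lineMap x y with hL
  have hLs : ∀ s : ℝ, L s = x + s • d := by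
    intro s
    simp [hL, hd, AffineMap.lineMap_apply]
    abel
  have hφconv : ConvexOn ℝ Set.univ (f ∘ L) := by
    have := hconv.comp_affineMap L
    simpa using this
  have hderivL : HasDerivAt (fun s : ℝ => L s) d 0 := by
    simp_rw [hLs]
    simpa using ((hasDerivAt_id (0:ℝ)).smul_const d).const_add x
  have hφ : HasDerivAt (f ∘ L) (fderiv ℝ f x d) 0 := by
    have hx0 : L 0 = x := by simp [hLs]
    have := (hdiff (L 0)).hasFDerivAt.comp_hasDerivAt 0 hderivL
    simpa [hx0] using this
  have hslope := hφconv.le_slope_of_hasDerivAt (Set.mem_univ (0:ℝ))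
    (Set.mem_univ (1:ℝ)) one_pos hφ
  have h01 : slope (f ∘ L) 0 1 = f y - f x := by
    simp [slope_def_field, Function.comp, hLs, hd]
  rw [h01] at hslope
  exact hslope

/-- TLMP individual rationality: if `g*` is feasible and the KKT stationarity
condition `∇f(g*) - λ* + Aᵀ(μ̄* - μ*) + (ρ̄* - ρ*) = 0` and complementary
slackness hold, then under the temporal locational marginal price
`π^TLMP = λ* - Aᵀ(μ̄* - μ*)` the dispatch `g*` minimizes `f(g) - gᵀπ^TLMP`
over the feasible set. -/
theorem tlmp_individual_rationality {W : ℕ} (hW : 0 < W)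
    (gbar rlo rhi : Fin W → ℝ)
    (f : (Fin W → ℝ) → ℝ)
    (hconv : ConvexOn ℝ Set.univ f)
    (hdiff : Differentiable ℝ f)
    (gstar : Fin W → ℝ)
    (hfeas : gstar ∈ genFeasible gbar rlo rhi)
    (lam : Fin W → ℝ)
    (df : Fin W → ℝ)  -- the gradient ∇f(g*)
    (hgrad : ∀ v : Fin W → ℝ, fderiv ℝ f gstar v = ∑ t, df t * v t)
    (μu μl ρu ρl : Fin W → ℝ)
    (hμu : ∀ t, 0 ≤ μu t) (hμl : ∀ t, 0 ≤ μl t)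
    (hρu : ∀ t, 0 ≤ ρu t) (hρl : ∀ t, 0 ≤ ρl t)
    (hstat : ∀ t, df t - lam t + (rampMatrix W).transpose.mulVec (μu - μl) t
                    + (ρu t - ρl t) = 0)
    (hcs1 : ∀ t, μu t * ((rampMatrix W).mulVec gstar t - rhi t) = 0)
    (hcs2 : ∀ t, μl t * ((rampMatrix W).mulVec gstar t + rlo t) = 0)
    (hcs3 : ∀ t, ρu t * (gstar t - gbar t) = 0)
    (hcs4 : ∀ t, ρl t * gstar t = 0)
    (πTLMP : Fin W → ℝ)
    (hπ : πTLMP = lam - (rampMatrix W).transpose.mulVec (μu - μl)) :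
    ∀ g ∈ genFeasible gbar rlo rhi,
      f gstar - ∑ t, gstar t * πTLMP t ≤ f g - ∑ t, g t * πTLMP t := by
  intro g hg
  have hkey := convex_grad_ineq f hconv hdiff gstar g
  rw [hgrad] at hkey
  have hdf : ∀ t, df t = πTLMP t - (ρu t - ρl t) := by
    intro t
    have hs := hstat t
    rw [hπ]
    simp only [Pi.sub_apply]
    linarith
  have hS : ∑ t, (ρu t - ρl t) * (g t - gstar t) ≤ 0 := by
    apply Finset.sum_nonpos
    intro t _
    have h3 := hcs3 t
    have h4 := hcs4 t
    have hgt := hg.1 t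
    nlinarith [hρu t, hρl t, hgt.1, hgt.2]
  have hsum : ∑ t, df t * ((g - gstar) t) =
      (∑ t, πTLMP t * (g t - gstar t)) - ∑ t, (ρu t - ρl t) * (g t - gstar t) := by
    rw [← Finset.sum_sub_distrib]
    apply Finset.sum_congr rfl
    intro t _
    simp only [Pi.sub_apply, hdf t]
    ring
  have hexp : ∑ t, πTLMP t * (g t - gstar t) =
      (∑ t, g t * πTLMP t) - ∑ t, gstar t * πTLMP t := by
    rw [← Finset.sum_sub_distrib]
    apply Finset.sum_congr rfl
    intro t _
    ring
  rw [hsum, hexp] at hkey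
  linarith
end

section
/- Theorem (TLMP supports a strong equilibrium, per-interval optimality): Let W be a positive integer, A the W×W ramp matrix, and suppose the cost is separable: f(g) = Σ_{t=1}^W f_t(g_t) with each f_t : ℝ → ℝ convex and differentiable. Suppose g* ∈ ℝ^W satisfies 0 ≤ g* ≤ ḡ, λ* ∈ ℝ^W, and there exist componentwise nonnegative vectors μ̄*, μ*, ρ̄*, ρ* with f_t'(g*_t) − λ*_t + (Aᵀ(μ̄* − μ*))_t + (ρ̄*_t − ρ*_t) = 0 for all t, and complementary slackness ρ̄*_t·(g*_t − ḡ_t) = 0 and ρ*_t·g*_t = 0 for all t. Define π^TLMP = λ* − Aᵀ(μ̄* − μ*). Then for every interval t, the scalar g*_t minimizes f_t(x) − π^TLMP_t·x over x ∈ [0, ḡ_t]. -/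
lemma convex_tangent_line {f : ℝ → ℝ} (hconv : ConvexOn ℝ Set.univ f)
    (hdiff : Differentiable ℝ f) (y x : ℝ) :
    f y + deriv f y * (x - y) ≤ f x := by
  rcases lt_trichotomy x y with h | h | h
  · have := hconv.slope_le_deriv (Set.mem_univ x) (Set.mem_univ y) h (hdiff y)
    rw [slope_def_field] at this
    have hne : (0:ℝ) < y - x := by linarith
    rw [div_le_iff₀ hne] at this
    nlinarith
  · simp [h]
  · have := hconv.deriv_le_slope (Set.mem_univ y) (Set.mem_univ x) h (hdiff y)
    rw [slope_def_field] at this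
    have hne : (0:ℝ) < x - y := by linarith
    rw [le_div_iff₀ hne] at this
    nlinarith

/-- TLMP supports a strong equilibrium (per-interval optimality): with a
separable convex differentiable cost `f(g) = Σ_t f_t(g_t)`, capacity feasibility
`0 ≤ g* ≤ ḡ`, per-interval stationarity
`f_t'(g*_t) - λ*_t + (Aᵀ(μ̄* - μ*))_t + (ρ̄*_t - ρ*_t) = 0`, and complementary
slackness for the capacity bounds, the TLMP `π^TLMP = λ* - Aᵀ(μ̄* - μ*)` makes
each `g*_t` a minimizer of `f_t(x) - π^TLMP_t · x` over `x ∈ [0, ḡ_t]`. -/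
theorem tlmp_strong_equilibrium {W : ℕ} (hW : 0 < W)
    (gbar : Fin W → ℝ)
    (f : Fin W → ℝ → ℝ)
    (hconv : ∀ t, ConvexOn ℝ Set.univ (f t))
    (hdiff : ∀ t, Differentiable ℝ (f t))
    (gstar : Fin W → ℝ)
    (hfeas : ∀ t, 0 ≤ gstar t ∧ gstar t ≤ gbar t)
    (lam : Fin W → ℝ)
    (μu μl ρu ρl : Fin W → ℝ)
    (hμu : ∀ t, 0 ≤ μu t) (hμl : ∀ t, 0 ≤ μl t)
    (hρu : ∀ t, 0 ≤ ρu t) (hρl : ∀ t, 0 ≤ ρl t)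
    (hstat : ∀ t, deriv (f t) (gstar t) - lam t
                    + (rampMatrix W).transpose.mulVec (μu - μl) t
                    + (ρu t - ρl t) = 0)
    (hcs3 : ∀ t, ρu t * (gstar t - gbar t) = 0)
    (hcs4 : ∀ t, ρl t * gstar t = 0)
    (πTLMP : Fin W → ℝ)
    (hπ : πTLMP = lam - (rampMatrix W).transpose.mulVec (μu - μl)) :
    ∀ t, ∀ x ∈ Set.Icc (0 : ℝ) (gbar t),
      f t (gstar t) - πTLMP t * gstar t ≤ f t x - πTLMP t * x := by
  intro t x hx
  obtain ⟨hx0, hxg⟩ := hx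
  have hd : deriv (f t) (gstar t) = πTLMP t - ρu t + ρl t := by
    have := hstat t
    rw [hπ]; simp only [Pi.sub_apply]; linarith
  have htan := convex_tangent_line (hconv t) (hdiff t) (gstar t) x
  have h1 : ρl t * x ≥ 0 := mul_nonneg (hρl t) hx0
  have h2 : ρu t * (x - gstar t) ≤ 0 := by
    have := hcs3 t
    nlinarith [hρu t]
  have h4 := hcs4 t
  rw [hd] at htan
  nlinarith [htan, h1, h2, h4]
end

section
/- Theorem (revenue adequacy of TLMP): Let W, N be positive integers, A the W×W ramp matrix, d, λ ∈ ℝ^W. For each i ∈ {1,…,N}, let g_i ∈ ℝ^W, let μ̄_i, μ_i ∈ ℝ^W be componentwise nonnegative, let r̄_i, ṟ_i ∈ ℝ^W be componentwise nonnegative ramp-limit vectors, and set π_i = λ − Aᵀ(μ̄_i − μ_i). Assume Σ_i g_i = d and the complementary slackness conditions: for all i and t, μ̄_{it}·((A g_i)_t − r̄_{it}) = 0 and μ_{it}·((A g_i)_t + ṟ_{it}) = 0. Then the merchandising surplus MS = dᵀλ − Σ_i π_iᵀ g_i equals Σ_i (r̄_iᵀ μ̄_i + ṟ_iᵀ μ_i),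 and in particular MS ≥ 0. -/
open scoped Matrix

/-- Revenue adequacy of TLMP: with prices `π_i = λ - Aᵀ(μ̄_i - μ_i)`,
nonnegative multipliers, nonnegative ramp limits, market clearing and
complementary slackness of the ramp constraints, the merchandising surplus
`MS = dᵀλ - Σ_i π_iᵀ g_i` equals `Σ_i (r̄_iᵀ μ̄_i + ṟ_iᵀ μ_i)` and in
particular is nonnegative. -/
theorem tlmp_revenue_adequacy {W N : ℕ} (hW : 0 < W) (hN : 0 < N)
    (d lam : Fin W → ℝ)
    (g : Fin N → Fin W → ℝ)
    (μu μl : Fin N → Fin W → ℝ)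
    (hμu : ∀ i t, 0 ≤ μu i t) (hμl : ∀ i t, 0 ≤ μl i t)
    (rhi rlo : Fin N → Fin W → ℝ)
    (hrhi : ∀ i t, 0 ≤ rhi i t) (hrlo : ∀ i t, 0 ≤ rlo i t)
    (π : Fin N → Fin W → ℝ)
    (hπ : ∀ i, π i = lam - (rampMatrix W).transpose.mulVec (μu i - μl i))
    (hbal : ∑ i, g i = d)
    (hcs1 : ∀ i t, μu i t * ((rampMatrix W).mulVec (g i) t - rhi i t) = 0)
    (hcs2 : ∀ i t, μl i t * ((rampMatrix W).mulVec (g i) t + rlo i t) = 0) :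
    (∑ t, d t * lam t) - (∑ i, ∑ t, π i t * g i t)
      = ∑ i, ((∑ t, rhi i t * μu i t) + ∑ t, rlo i t * μl i t) ∧
    0 ≤ (∑ t, d t * lam t) - (∑ i, ∑ t, π i t * g i t) := by
  have key : ∀ i, ∑ t, π i t * g i t
      = (∑ t, lam t * g i t)
        - ((∑ t, rhi i t * μu i t) + ∑ t, rlo i t * μl i t) := by
    intro i
    have h1 : ∑ t, π i t * g i t
        = (∑ t, lam t * g i t)
          - ∑ t, (μu i t - μl i t) * (rampMatrix W).mulVec (g i) t := by
      have hdot : (rampMatrix W).transpose.mulVec (μu i - μl i) ⬝ᵥ g i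
          = (μu i - μl i) ⬝ᵥ (rampMatrix W).mulVec (g i) := by
        rw [Matrix.mulVec_transpose, ← Matrix.dotProduct_mulVec]
      calc ∑ t, π i t * g i t
          = π i ⬝ᵥ g i := rfl
        _ = lam ⬝ᵥ g i - (rampMatrix W).transpose.mulVec (μu i - μl i) ⬝ᵥ g i := by
            rw [hπ i, sub_dotProduct]
        _ = (∑ t, lam t * g i t)
              - ∑ t, (μu i t - μl i t) * (rampMatrix W).mulVec (g i) t := by
            rw [hdot]; rfl
    rw [h1]
    congr 1
    rw [← Finset.sum_add_distrib]
    refine Finset.sum_congr rfl fun t _ => ?_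
    have e1 := hcs1 i t
    have e2 := hcs2 i t
    ring_nf
    ring_nf at e1 e2
    nlinarith [e1, e2]
  have hsum : ∑ i, ∑ t, π i t * g i t
      = (∑ t, d t * lam t)
        - ∑ i, ((∑ t, rhi i t * μu i t) + ∑ t, rlo i t * μl i t) := by
    rw [Finset.sum_congr rfl fun i _ => key i, Finset.sum_sub_distrib]
    congr 1
    rw [Finset.sum_comm]
    refine Finset.sum_congr rfl fun t _ => ?_
    have hd : ∑ i, g i t = d t := by simpa using congrFun hbal t
    rw [← Finset.mul_sum, hd, mul_comm]
  constructor
  · rw [hsum]; ring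
  · rw [hsum]
    have : 0 ≤ ∑ i, ((∑ t, rhi i t * μu i t) + ∑ t, rlo i t * μl i t) := by
      refine Finset.sum_nonneg fun i _ => add_nonneg ?_ ?_ <;>
        exact Finset.sum_nonneg fun t _ => mul_nonneg (by first | exact hrhi i t | exact hrlo i t)
          (by first | exact hμu i t | exact hμl i t)
    linarith
end

section
/- Theorem (no uniform price eliminates LOC for two generators with distinct marginal costs): Let W ≥ 2, A the W×W ramp matrix, and for i ∈ {1,2} let P_i = {g ∈ ℝ^W : 0 ≤ g ≤ ḡ_i and −ṟ_i ≤ A g ≤ r̄_i} and f_i(g) = Σ_t f_{it}(g_t) with each f_{it} : ℝ → ℝ differentiable. Let π ∈ ℝ^W be a uniform price and suppose that for each i ∈ {1,2} the dispatch g_i minimizes f_i(g) − πᵀg over P_i (zero lost opportunity cost), and that at a common interval t* with 1 ≤ t* < W both generators satisfy: 0 < g_{i,t*} < ḡ_{i,t*}, −ṟ_{i,t*} < (A g_i)_{t*} < r̄_{i,t*}, and −ṟ_{i,t*+1} < (A g_i)_{t*+1} < r̄_{i,t*+1}. Then f_{1,t*}'(g_{1,t*}) = f_{2,t*}'(g_{2,t*}).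 Consequently, if the two generators have different marginal bid-in costs of generation at interval t*, i.e., f_{1,t*}'(g_{1,t*}) ≠ f_{2,t*}'(g_{2,t*}), no uniform price can give both generators zero lost opportunity cost. -/
/-- No uniform price eliminates LOC for two generators with distinct marginal
costs: if under a uniform price `π` both generators have zero lost opportunity
cost (their dispatches minimize bid-in cost minus revenue over their feasible
sets), and at a common interval `t*` neither generator's capacity limits nor
adjacent ramp constraints are binding, then the two marginal costs at `t*`
must coincide: `f_{1,t*}'(g_{1,t*}) = f_{2,t*}'(g_{2,t*})`.  Consequently, if
the marginal bid-in costs at `t*` differ, no uniform price can give both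
generators zero LOC. -/
theorem no_uniform_price_zero_loc {W : ℕ} (hW : 2 ≤ W)
    (gbar rlo rhi : Fin 2 → Fin W → ℝ)
    (f : Fin 2 → Fin W → ℝ → ℝ)
    (hdiff : ∀ i t, Differentiable ℝ (f i t))
    (π : Fin W → ℝ)
    (g : Fin 2 → Fin W → ℝ)
    (hfeas : ∀ i, g i ∈ genFeasible (gbar i) (rlo i) (rhi i))
    (hmin : ∀ i, ∀ h ∈ genFeasible (gbar i) (rlo i) (rhi i),
      (∑ t, f i t (g i t)) - ∑ t, π t * g i t
        ≤ (∑ t, f i t (h t)) - ∑ t, π t * h t)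
    (tstar : Fin W) (htstar : (tstar : ℕ) + 1 < W)
    (hcap : ∀ i, 0 < g i tstar ∧ g i tstar < gbar i tstar)
    (hramp1 : ∀ i, -(rlo i tstar) < (rampMatrix W).mulVec (g i) tstar ∧
              (rampMatrix W).mulVec (g i) tstar < rhi i tstar)
    (hramp2 : ∀ i, -(rlo i ⟨(tstar : ℕ) + 1, htstar⟩)
                < (rampMatrix W).mulVec (g i) ⟨(tstar : ℕ) + 1, htstar⟩ ∧
              (rampMatrix W).mulVec (g i) ⟨(tstar : ℕ) + 1, htstar⟩
                < rhi i ⟨(tstar : ℕ) + 1, htstar⟩) :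
    deriv (f 0 tstar) (g 0 tstar) = deriv (f 1 tstar) (g 1 tstar) := by
  have key : ∀ i, deriv (f i tstar) (g i tstar) = π tstar := by
    intro i
    set t1 : Fin W := ⟨(tstar : ℕ) + 1, htstar⟩ with ht1def
    obtain ⟨hcapl, hcapu⟩ := hcap i
    obtain ⟨hr1l, hr1u⟩ := hramp1 i
    obtain ⟨hr2l, hr2u⟩ := hramp2 i
    obtain ⟨hbox, hramp⟩ := hfeas i
    set a := g i tstar with ha
    have htne : tstar ≠ t1 := by
      intro h
      have := congrArg Fin.val h
      simp [ht1def] at this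
    -- mulVec of updated vector
    have hmv : ∀ (x : ℝ) (s : Fin W),
        (rampMatrix W).mulVec (Function.update (g i) tstar x) s
        = (rampMatrix W).mulVec (g i) s + rampMatrix W s tstar * (x - a) := by
      intro x s
      simp only [Matrix.mulVec, dotProduct]
      have h1 : ∀ j : Fin W, rampMatrix W s j * Function.update (g i) tstar x j
          = rampMatrix W s j * g i j
            + (if j = tstar then rampMatrix W s tstar * (x - a) else 0) := by
        intro j
        rcases eq_or_ne j tstar with rfl | hj
        · simp [Function.update_self]; ring
        · simp [Function.update_of_ne hj, hj]
      rw [Finset.sum_congr rfl fun j _ => h1 j, Finset.sum_add_distrib,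
        Finset.sum_ite_eq' Finset.univ tstar]
      simp
    -- row entries of the ramp matrix in column tstar
    have hA1 : rampMatrix W tstar tstar = 1 := by simp [rampMatrix]
    have hA2 : rampMatrix W t1 tstar = -1 := by
      simp [rampMatrix, ht1def, htne.symm, Fin.ext_iff]
    have hA0 : ∀ s : Fin W, s ≠ tstar → s ≠ t1 → rampMatrix W s tstar = 0 := by
      intro s hs1 hs2
      have : (tstar : ℕ) + 1 ≠ (s : ℕ) := by
        intro h
        apply hs2
        apply Fin.ext
        simp [ht1def, ← h]
      simp [rampMatrix, hs1, this]
    -- eventual feasibility conditions near a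
    have ev : ∀ᶠ x in nhds a,
        (0 < x ∧ x < gbar i tstar) ∧
        (-(rlo i tstar) < (rampMatrix W).mulVec (g i) tstar + (x - a) ∧
          (rampMatrix W).mulVec (g i) tstar + (x - a) < rhi i tstar) ∧
        (-(rlo i t1) < (rampMatrix W).mulVec (g i) t1 - (x - a) ∧
          (rampMatrix W).mulVec (g i) t1 - (x - a) < rhi i t1) := by
      have c1 : ∀ᶠ x in nhds a, 0 < x := eventually_gt_nhds hcapl
      have c2 : ∀ᶠ x in nhds a, x < gbar i tstar := eventually_lt_nhds hcapu
      have hca : ContinuousAt (fun x : ℝ =>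
          (rampMatrix W).mulVec (g i) tstar + (x - a)) a :=
        (continuous_const.add (continuous_id.sub continuous_const)).continuousAt
      have hcb : ContinuousAt (fun x : ℝ =>
          (rampMatrix W).mulVec (g i) t1 - (x - a)) a :=
        (continuous_const.sub (continuous_id.sub continuous_const)).continuousAt
      have c3 : ∀ᶠ x in nhds a,
          -(rlo i tstar) < (rampMatrix W).mulVec (g i) tstar + (x - a) :=
        continuousAt_const.eventually_lt hca (by simpa using hr1l)
      have c4 : ∀ᶠ x in nhds a,
          (rampMatrix W).mulVec (g i) tstar + (x - a) < rhi i tstar :=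
        hca.eventually_lt continuousAt_const (by simpa using hr1u)
      have c5 : ∀ᶠ x in nhds a,
          -(rlo i t1) < (rampMatrix W).mulVec (g i) t1 - (x - a) :=
        continuousAt_const.eventually_lt hcb (by simpa using hr2l)
      have c6 : ∀ᶠ x in nhds a,
          (rampMatrix W).mulVec (g i) t1 - (x - a) < rhi i t1 :=
        hcb.eventually_lt continuousAt_const (by simpa using hr2u)
      filter_upwards [c1, c2, c3, c4, c5, c6] with x h1 h2 h3 h4 h5 h6
      exact ⟨⟨h1, h2⟩, ⟨h3, h4⟩, ⟨h5, h6⟩⟩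
    -- local minimum of the single-interval objective
    have hloc : IsLocalMin (fun x => f i tstar x - π tstar * x) a := by
      refine ev.mono fun x hx => ?_
      obtain ⟨⟨hx1, hx2⟩, ⟨hx3, hx4⟩, ⟨hx5, hx6⟩⟩ := hx
      have hfeasx : Function.update (g i) tstar x ∈
          genFeasible (gbar i) (rlo i) (rhi i) := by
        constructor
        · intro t
          rcases eq_or_ne t tstar with rfl | ht
          · simp [Function.update_self]
            exact ⟨le_of_lt hx1, le_of_lt hx2⟩
          · simp [Function.update_of_ne ht]
            exact hbox t
        · intro s
          rw [hmv x s]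
          rcases eq_or_ne s tstar with rfl | hs1
          · rw [hA1]
            constructor <;> [linarith; linarith]
          rcases eq_or_ne s t1 with rfl | hs2
          · rw [hA2]
            constructor <;> [linarith; linarith]
          · rw [hA0 s hs1 hs2]
            simpa using hramp s
      have hineq := hmin i _ hfeasx
      have hd1 : (∑ j, f i j (Function.update (g i) tstar x j))
          - ∑ j, f i j (g i j) = f i tstar x - f i tstar a := by
        rw [← Finset.sum_sub_distrib]
        rw [Finset.sum_eq_single tstar]
        · simp [Function.update_self, ha]
        · intro j _ hj
          simp [Function.update_of_ne hj]
        · simp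
      have hd2 : (∑ j, π j * Function.update (g i) tstar x j)
          - ∑ j, π j * g i j = π tstar * x - π tstar * a := by
        rw [← Finset.sum_sub_distrib]
        rw [Finset.sum_eq_single tstar]
        · simp [Function.update_self, ha]
        · intro j _ hj
          simp [Function.update_of_ne hj]
        · simp
      simp only [ha] at hd1 hd2 ⊢
      linarith
    have hd : HasDerivAt (fun x => f i tstar x - π tstar * x)
        (deriv (f i tstar) a - π tstar) a := by
      have h1 : HasDerivAt (f i tstar) (deriv (f i tstar) a) a :=
        ((hdiff i tstar) a).hasDerivAt
      have h2 : HasDerivAt (fun x : ℝ => π tstar * x) (π tstar) a := by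
        simpa using (hasDerivAt_id a).const_mul (π tstar)
      exact h1.sub h2
    have := hloc.hasDerivAt_eq_zero hd
    linarith
  rw [key 0, key 1]
end
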